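/- Let D ⊆ ℝ² be a bounded open set, let x₀ ∈ D, let r : ℝ → ℝ be continuous and 2π-periodic, and let (r_k)_{k≥1} be a sequence of continuous 2π-periodic functions on ℝ with ‖r_k − r‖_∞ → 0 as k → ∞. Then the Lebesgue measure of the symmetric difference A(r_k, x₀) Δ A(r, x₀) tends to 0 as k → ∞. -/

import Mathlib

/-!
If `‖s - r‖_∞ ≤ δ`, the symmetric difference `A(s, x₀) Δ A(r, x₀)` lies in the shell
`{x ∈ D : |‖x - x₀‖ - r(h(x - x₀))| ≤ δ}`. As `δ → 0` these shells decrease, inside the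
finite-measure set `D`, to the polar graph `{‖x - x₀‖ = r(h(x - x₀))}`. That graph is null:
it is the image of the Lebesgue-null graph `{(θ, ρ) : ρ = r θ}` under the smooth map
`(θ, ρ) ↦ ρ e^{iθ}`.
-/

open MeasureTheory Filter

/-- The angular polar coordinate of a point in the plane (the argument of the
corresponding complex number, taking values in `(-π, π]`). -/
noncomputable def polarAngle (x : EuclideanSpace ℝ (Fin 2)) : ℝ :=
  Complex.arg ⟨x 0, x 1⟩

/-- The star-shaped inclusion `A(r, x₀) = {x ∈ D : |x − x₀| ≤ r(h(x − x₀))}`. -/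
def starSet (D : Set (EuclideanSpace ℝ (Fin 2))) (r : ℝ → ℝ)
    (x₀ : EuclideanSpace ℝ (Fin 2)) : Set (EuclideanSpace ℝ (Fin 2)) :=
  {x | x ∈ D ∧ ‖x - x₀‖ ≤ r (polarAngle (x - x₀))}

open Set Topology Complex

theorem measure_graph_eq_zero {α β : Type*} [MeasurableSpace α] [MeasurableSpace β]
    [MeasurableEq β] (μ : Measure α) (ν : Measure β) [SFinite ν]
    [NullSingletonClass ν] {f : α → β} (hf : Measurable f) :
    μ.prod ν {p | p.2 = f p.1} = 0 := by
  rw [Measure.prod_apply (measurableSet_eq_fun measurable_snd (hf.comp measurable_fst) :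
    MeasurableSet {p : α × β | p.2 = f p.1})]
  simp [preimage, measure_singleton]

theorem volume_setOf_norm_eq_comp_arg {f : ℝ → ℝ} (hf : Measurable f) :
    volume {z : ℂ | ‖z‖ = f (arg z)} = 0 := by
  have hgraph : volume {z : ℂ | z.im = f z.re} = 0 :=
    volume_preserving_equiv_real_prod.quasiMeasurePreserving.preimage_null
      (measure_graph_eq_zero volume volume hf)
  refine measure_mono_null ?_ <|
    addHaar_image_eq_zero_of_differentiableOn_of_addHaar_eq_zero volume
      (f := fun w : ℂ => w.im * exp (w.re * I)) (Differentiable.differentiableOn (by fun_prop))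
      hgraph
  exact fun z (hz : ‖z‖ = f (arg z)) => ⟨⟨arg z, ‖z‖⟩, hz, norm_mul_exp_arg_mul_I z⟩

theorem polarAngle_eq_arg (y : EuclideanSpace ℝ (Fin 2)) :
    polarAngle y = arg (orthonormalBasisOneI.repr.symm y) := by
  rw [orthonormalBasisOneI_repr_symm_apply, ← mk_eq_add_mul_I]; rfl

theorem measurable_polarAngle : Measurable polarAngle := by
  rw [funext polarAngle_eq_arg]
  exact measurable_arg.comp orthonormalBasisOneI.repr.symm.continuous.measurable

theorem volume_setOf_norm_sub_eq_comp_polarAngle {f : ℝ → ℝ} (hf : Measurable f)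
    (x₀ : EuclideanSpace ℝ (Fin 2)) :
    volume {x | ‖x - x₀‖ = f (polarAngle (x - x₀))} = 0 := by
  have hΦ := orthonormalBasisOneI.repr.symm.measurePreserving.comp
    (measurePreserving_sub_right volume x₀)
  refine hΦ.quasiMeasurePreserving.preimage_null (volume_setOf_norm_eq_comp_arg hf) |>
    measure_mono_null fun x (hx : ‖x - x₀‖ = _) => ?_
  simpa only [mem_preimage, Function.comp_apply, mem_ofPred_eq, LinearIsometryEquiv.norm_map,
    ← polarAngle_eq_arg]

theorem tendsto_measure_setOf_abs_sub_le {α : Type*} [MeasurableSpace α] {μ : Measure α}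
    [IsFiniteMeasure μ] {f g : α → ℝ} (hf : Measurable f) (hg : Measurable g) :
    Tendsto (fun δ => μ {x | |f x - g x| ≤ δ}) (𝓝[>] 0) (𝓝 (μ {x | f x = g x})) := by
  have hinter : ⋂ δ > (0 : ℝ), {x | |f x - g x| ≤ δ} = {x | f x = g x} := by
    ext x
    simp only [mem_iInter, mem_ofPred_eq]
    refine ⟨fun h => sub_eq_zero.1 (abs_nonpos_iff.1 (le_of_forall_pos_le_add fun ε hε => ?_)),
      fun h δ hδ => by simpa [h] using hδ.le⟩
    simpa using h ε hε
  rw [← hinter]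
  exact tendsto_measure_biInter_gt
    (fun δ _ => ((hf.sub hg).abs measurableSet_Iic).nullMeasurableSet)
    (fun i j _ hij x (hx : _ ≤ i) => hx.trans hij) ⟨1, one_pos, measure_ne_top μ _⟩

theorem symmDiff_starSet_subset {D : Set (EuclideanSpace ℝ (Fin 2))} {r s : ℝ → ℝ}
    {x₀ : EuclideanSpace ℝ (Fin 2)} {δ : ℝ} (h : ∀ θ, dist (r θ) (s θ) ≤ δ) :
    symmDiff (starSet D s x₀) (starSet D r x₀) ⊆
      {x | |‖x - x₀‖ - r (polarAngle (x - x₀))| ≤ δ} ∩ D := by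
  intro x hx
  have hθ := abs_le.1 (h (polarAngle (x - x₀)))
  rcases mem_symmDiff.1 hx with ⟨⟨hxD, hs⟩, hnr⟩ | ⟨⟨hxD, hr⟩, hns⟩
  · have hr : r (polarAngle (x - x₀)) < ‖x - x₀‖ := lt_of_not_ge fun hle => hnr ⟨hxD, hle⟩
    refine ⟨?_, hxD⟩
    rw [mem_ofPred_eq, abs_le]
    constructor <;> linarith [hs]
  · have hs : s (polarAngle (x - x₀)) < ‖x - x₀‖ := lt_of_not_ge fun hle => hns ⟨hxD, hle⟩
    refine ⟨?_, hxD⟩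
    rw [mem_ofPred_eq, abs_le]
    constructor <;> linarith [hr]

theorem stmt1_general (D : Set (EuclideanSpace ℝ (Fin 2)))
    (hDbdd : Bornology.IsBounded D)
    (x₀ : EuclideanSpace ℝ (Fin 2))
    (r : ℝ → ℝ) (hr : Continuous r)
    (rk : ℕ → ℝ → ℝ)
    (hconv : TendstoUniformly rk r atTop) :
    Tendsto (fun k => volume (symmDiff (starSet D (rk k) x₀) (starSet D r x₀)))
      atTop (nhds 0) := by
  have : IsFiniteMeasure (volume.restrict D) :=
    isFiniteMeasure_restrict.2 hDbdd.measure_lt_top.ne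
  have hr' : Measurable fun x => r (polarAngle (x - x₀)) :=
    hr.measurable.comp (measurable_polarAngle.comp (measurable_id.sub_const x₀))
  have hshell : Tendsto (fun δ => volume.restrict D
      {x | |‖x - x₀‖ - r (polarAngle (x - x₀))| ≤ δ}) (𝓝[>] 0) (𝓝 0) := by
    have hnull := volume_setOf_norm_sub_eq_comp_polarAngle hr.measurable x₀
    simpa only [Measure.absolutelyContinuous_restrict hnull] using
      tendsto_measure_setOf_abs_sub_le (μ := volume.restrict D)
        (f := fun x => ‖x - x₀‖) (by fun_prop) hr'
  rw [ENNReal.tendsto_nhds_zero]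
  intro ε hε
  obtain ⟨δ, hδε, hδ⟩ :=
    ((ENNReal.tendsto_nhds_zero.1 hshell ε hε).and self_mem_nhdsWithin).exists
  filter_upwards [Metric.tendstoUniformly_iff.1 hconv δ hδ] with k hk
  calc volume (symmDiff (starSet D (rk k) x₀) (starSet D r x₀))
      ≤ volume ({x | |‖x - x₀‖ - r (polarAngle (x - x₀))| ≤ δ} ∩ D) :=
        measure_mono (symmDiff_starSet_subset fun θ => (hk θ).le)
    _ ≤ _ := Measure.le_restrict_apply _ _
    _ ≤ ε := hδε

theorem stmt1 (D : Set (EuclideanSpace ℝ (Fin 2))) (hDopen : IsOpen D)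
    (hDbdd : Bornology.IsBounded D)
    (x₀ : EuclideanSpace ℝ (Fin 2)) (hx₀ : x₀ ∈ D)
    (r : ℝ → ℝ) (hr : Continuous r) (hrper : Function.Periodic r (2 * Real.pi))
    (rk : ℕ → ℝ → ℝ) (hrk : ∀ k, Continuous (rk k))
    (hrkper : ∀ k, Function.Periodic (rk k) (2 * Real.pi))
    (hconv : TendstoUniformly rk r atTop) :
    Tendsto (fun k => volume (symmDiff (starSet D (rk k) x₀) (starSet D r x₀)))
      atTop (nhds 0) :=
  stmt1_general D hDbdd x₀ r hr rk hconv
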